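/- Let F and F̄ be Finsler metrics on an open set U ⊆ ℝ^n whose spray coefficients are projectively related: Ḡ^i(x,y) = G^i(x,y) + P(x,y) y^i for some function P that is smooth on U × (ℝ^n ∖ {0}) and positively 1-homogeneous in y. Then F is a generalized Douglas–Weyl (GDW) metric if and only if F̄ is a generalized Douglas–Weyl metric. -/

import Mathlib

open Set

noncomputable section

/-- Partial derivative in the `m`-th coordinate of a function on `ℝⁿ`. -/
def pd {n : ℕ} (m : Fin n) (f : (Fin n → ℝ) → ℝ) : (Fin n → ℝ) → ℝ :=
  fun x => fderiv ℝ f x (Pi.single m 1)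

/-- Partial derivative in `x^m` of a function of `(x, y)`. -/
def pdx {n : ℕ} (m : Fin n) (f : (Fin n → ℝ) → (Fin n → ℝ) → ℝ) :
    (Fin n → ℝ) → (Fin n → ℝ) → ℝ :=
  fun x y => fderiv ℝ (fun x' => f x' y) x (Pi.single m 1)

/-- Partial derivative in `y^m` of a function of `(x, y)`. -/
def pdy {n : ℕ} (m : Fin n) (f : (Fin n → ℝ) → (Fin n → ℝ) → ℝ) :
    (Fin n → ℝ) → (Fin n → ℝ) → ℝ :=
  fun x y => fderiv ℝ (f x) y (Pi.single m 1)

/-- The square `F²` of a Finsler metric. -/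
def Fsq {n : ℕ} (F : (Fin n → ℝ) → (Fin n → ℝ) → ℝ) : (Fin n → ℝ) → (Fin n → ℝ) → ℝ :=
  fun x y => (F x y) ^ 2

/-- Fundamental tensor `g_{ij} = (1/2) ∂²(F²)/∂y^i∂y^j`. -/
def fundTensor {n : ℕ} (F : (Fin n → ℝ) → (Fin n → ℝ) → ℝ) (i j : Fin n) :
    (Fin n → ℝ) → (Fin n → ℝ) → ℝ :=
  fun x y => (1 / 2) * pdy i (pdy j (Fsq F)) x y

/-- The fundamental tensor as a matrix, so that we may invert it. -/
def gMatrix {n : ℕ} (F : (Fin n → ℝ) → (Fin n → ℝ) → ℝ) (x y : Fin n → ℝ) :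
    Matrix (Fin n) (Fin n) ℝ :=
  Matrix.of fun i j => fundTensor F i j x y

/-- Spray coefficients `G^i = (1/4) g^{il} ( y^m ∂²(F²)/∂y^l∂x^m − ∂(F²)/∂x^l )`. -/
def spray {n : ℕ} (F : (Fin n → ℝ) → (Fin n → ℝ) → ℝ) (i : Fin n) :
    (Fin n → ℝ) → (Fin n → ℝ) → ℝ :=
  fun x y => (1 / 4) * ∑ l, (gMatrix F x y)⁻¹ i l *
    ((∑ m, y m * pdy l (pdx m (Fsq F)) x y) - pdx l (Fsq F) x y)

/-- `F` is a Finsler metric on the open set `U ⊆ ℝⁿ`. -/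
structure IsFinslerOn (n : ℕ) (U : Set (Fin n → ℝ))
    (F : (Fin n → ℝ) → (Fin n → ℝ) → ℝ) : Prop where
  isOpen : IsOpen U
  continuous : ContinuousOn (fun p : (Fin n → ℝ) × (Fin n → ℝ) => F p.1 p.2) (U ×ˢ univ)
  smooth : ContDiffOn ℝ (⊤ : ℕ∞) (fun p : (Fin n → ℝ) × (Fin n → ℝ) => F p.1 p.2)
    (U ×ˢ {y : Fin n → ℝ | y ≠ 0})
  pos : ∀ x ∈ U, ∀ y : Fin n → ℝ, y ≠ 0 → 0 < F x y
  homog : ∀ x ∈ U, ∀ y : Fin n → ℝ, ∀ c : ℝ, 0 < c → F x (c • y) = c * F x y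
  posdef : ∀ x ∈ U, ∀ y : Fin n → ℝ, y ≠ 0 → ∀ v : Fin n → ℝ, v ≠ 0 →
    0 < ∑ i, ∑ j, fundTensor F i j x y * v i * v j

/-- The Douglas tensor of a family of spray coefficients:
`D_j{}^i{}_{kl} = ∂³/∂y^j∂y^k∂y^l [ G^i − (1/(n+1)) (∂G^m/∂y^m) y^i ]`. -/
def douglasOfSpray {n : ℕ} (G : Fin n → (Fin n → ℝ) → (Fin n → ℝ) → ℝ)
    (j i k l : Fin n) : (Fin n → ℝ) → (Fin n → ℝ) → ℝ :=
  pdy j (pdy k (pdy l (fun x y =>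
    G i x y - (1 / ((n : ℝ) + 1)) * (∑ m, pdy m (G m) x y) * y i)))

/-- The Douglas tensor of a Finsler metric. -/
def douglasTensor {n : ℕ} (F : (Fin n → ℝ) → (Fin n → ℝ) → ℝ)
    (j i k l : Fin n) : (Fin n → ℝ) → (Fin n → ℝ) → ℝ :=
  douglasOfSpray (spray F) j i k l

/-- `F` is a Douglas metric on `U`: its Douglas tensor vanishes identically. -/
def IsDouglas {n : ℕ} (U : Set (Fin n → ℝ)) (F : (Fin n → ℝ) → (Fin n → ℝ) → ℝ) : Prop :=
  ∀ x ∈ U, ∀ y : Fin n → ℝ, y ≠ 0 → ∀ j i k l : Fin n, douglasTensor F j i k l x y = 0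

/-- Berwald curvature `B_j{}^i{}_{kl} = ∂³G^i/∂y^j∂y^k∂y^l`. -/
def berwaldCurv {n : ℕ} (F : (Fin n → ℝ) → (Fin n → ℝ) → ℝ) (j i k l : Fin n) :
    (Fin n → ℝ) → (Fin n → ℝ) → ℝ :=
  pdy j (pdy k (pdy l (spray F i)))

/-- `F` is a Berwald metric on `U`. -/
def IsBerwald {n : ℕ} (U : Set (Fin n → ℝ)) (F : (Fin n → ℝ) → (Fin n → ℝ) → ℝ) : Prop :=
  ∀ x ∈ U, ∀ y : Fin n → ℝ, y ≠ 0 → ∀ j i k l : Fin n, berwaldCurv F j i k l x y = 0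

/-- Landsberg curvature `L_{jkl} = −(1/2) F (∂F/∂y^i) B_j{}^i{}_{kl}`. -/
def landsberg {n : ℕ} (F : (Fin n → ℝ) → (Fin n → ℝ) → ℝ) (j k l : Fin n) :
    (Fin n → ℝ) → (Fin n → ℝ) → ℝ :=
  fun x y => -(1 / 2) * F x y * ∑ i, pdy i F x y * berwaldCurv F j i k l x y

/-- `F` is a Landsberg metric on `U`. -/
def IsLandsberg {n : ℕ} (U : Set (Fin n → ℝ)) (F : (Fin n → ℝ) → (Fin n → ℝ) → ℝ) : Prop :=
  ∀ x ∈ U, ∀ y : Fin n → ℝ, y ≠ 0 → ∀ j k l : Fin n, landsberg F j k l x y = 0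

/-- Cartan torsion `C_{ijk} = (1/4) ∂³(F²)/∂y^i∂y^j∂y^k`. -/
def cartan {n : ℕ} (F : (Fin n → ℝ) → (Fin n → ℝ) → ℝ) (i j k : Fin n) :
    (Fin n → ℝ) → (Fin n → ℝ) → ℝ :=
  fun x y => (1 / 4) * pdy i (pdy j (pdy k (Fsq F))) x y

/-- `F` is Riemannian on `U`: its Cartan torsion vanishes identically. -/
def IsRiemannian {n : ℕ} (U : Set (Fin n → ℝ)) (F : (Fin n → ℝ) → (Fin n → ℝ) → ℝ) : Prop :=
  ∀ x ∈ U, ∀ y : Fin n → ℝ, y ≠ 0 → ∀ i j k : Fin n, cartan F i j k x y = 0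

/-- Mean Berwald curvature `E_{jk} = (1/2) ∂³G^m/∂y^j∂y^k∂y^m`. -/
def meanBerwald {n : ℕ} (F : (Fin n → ℝ) → (Fin n → ℝ) → ℝ) (j k : Fin n) :
    (Fin n → ℝ) → (Fin n → ℝ) → ℝ :=
  fun x y => (1 / 2) * ∑ m, pdy j (pdy k (pdy m (spray F m))) x y

/-- Angular metric `h_{jk} = g_{jk} − (∂F/∂y^j)(∂F/∂y^k)`. -/
def angular {n : ℕ} (F : (Fin n → ℝ) → (Fin n → ℝ) → ℝ) (j k : Fin n) :
    (Fin n → ℝ) → (Fin n → ℝ) → ℝ :=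
  fun x y => fundTensor F j k x y - pdy j F x y * pdy k F x y

/-- `F` has isotropic mean Berwald curvature:
`E_{jk} = ((n+1)/2) c(x) F⁻¹ h_{jk}` for some function `c` on `U`. -/
def HasIsotropicMeanBerwald {n : ℕ} (U : Set (Fin n → ℝ))
    (F : (Fin n → ℝ) → (Fin n → ℝ) → ℝ) : Prop :=
  ∃ c : (Fin n → ℝ) → ℝ, ∀ x ∈ U, ∀ y : Fin n → ℝ, y ≠ 0 → ∀ j k : Fin n,
    meanBerwald F j k x y = (((n : ℝ) + 1) / 2) * c x * (F x y)⁻¹ * angular F j k x y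

/-- `F` has relatively isotropic Landsberg curvature:
`L_{jkl} + c(x) F C_{jkl} = 0` for some function `c` on `U`. -/
def HasRelIsotropicLandsberg {n : ℕ} (U : Set (Fin n → ℝ))
    (F : (Fin n → ℝ) → (Fin n → ℝ) → ℝ) : Prop :=
  ∃ c : (Fin n → ℝ) → ℝ, ∀ x ∈ U, ∀ y : Fin n → ℝ, y ≠ 0 → ∀ j k l : Fin n,
    landsberg F j k l x y + c x * F x y * cartan F j k l x y = 0

/-- Nonlinear connection coefficients `N^i_m = ∂G^i/∂y^m`. -/
def Nconn {n : ℕ} (F : (Fin n → ℝ) → (Fin n → ℝ) → ℝ) (i m : Fin n) :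
    (Fin n → ℝ) → (Fin n → ℝ) → ℝ :=
  pdy m (spray F i)

/-- Berwald connection coefficients `Γ^i_{jm} = ∂²G^i/∂y^j∂y^m`. -/
def GammaConn {n : ℕ} (F : (Fin n → ℝ) → (Fin n → ℝ) → ℝ) (i j m : Fin n) :
    (Fin n → ℝ) → (Fin n → ℝ) → ℝ :=
  pdy j (pdy m (spray F i))

/-- Horizontal covariant derivative (Berwald connection) of a `(0,2)`-tensor. -/
def hcov2 {n : ℕ} (F : (Fin n → ℝ) → (Fin n → ℝ) → ℝ)
    (T : Fin n → Fin n → (Fin n → ℝ) → (Fin n → ℝ) → ℝ) (j k m : Fin n) :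
    (Fin n → ℝ) → (Fin n → ℝ) → ℝ :=
  fun x y => pdx m (T j k) x y - (∑ s, Nconn F s m x y * pdy s (T j k) x y)
    - (∑ s, T s k x y * GammaConn F s j m x y)
    - (∑ s, T j s x y * GammaConn F s k m x y)

/-- Horizontal covariant derivative (Berwald connection) of a `(0,3)`-tensor. -/
def hcov3 {n : ℕ} (F : (Fin n → ℝ) → (Fin n → ℝ) → ℝ)
    (T : Fin n → Fin n → Fin n → (Fin n → ℝ) → (Fin n → ℝ) → ℝ) (j k l m : Fin n) :
    (Fin n → ℝ) → (Fin n → ℝ) → ℝ :=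
  fun x y => pdx m (T j k l) x y - (∑ s, Nconn F s m x y * pdy s (T j k l) x y)
    - (∑ s, T s k l x y * GammaConn F s j m x y)
    - (∑ s, T j s l x y * GammaConn F s k m x y)
    - (∑ s, T j k s x y * GammaConn F s l m x y)

/-- Horizontal covariant derivative `D_j{}^i{}_{kl|m}` of the Douglas tensor. -/
def dougHCov {n : ℕ} (F : (Fin n → ℝ) → (Fin n → ℝ) → ℝ) (j i k l m : Fin n) :
    (Fin n → ℝ) → (Fin n → ℝ) → ℝ :=
  fun x y => pdx m (douglasTensor F j i k l) x y
    - (∑ s, Nconn F s m x y * pdy s (douglasTensor F j i k l) x y)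
    + (∑ s, douglasTensor F j s k l x y * GammaConn F i s m x y)
    - (∑ s, douglasTensor F s i k l x y * GammaConn F s j m x y)
    - (∑ s, douglasTensor F j i s l x y * GammaConn F s k m x y)
    - (∑ s, douglasTensor F j i k s x y * GammaConn F s l m x y)

/-- `F` is a generalized Douglas–Weyl (GDW) metric on `U`:
`D_j{}^i{}_{kl|m} y^m = T_{jkl} y^i` for some functions `T_{jkl}(x,y)`. -/
def IsGDW {n : ℕ} (U : Set (Fin n → ℝ)) (F : (Fin n → ℝ) → (Fin n → ℝ) → ℝ) : Prop :=
  ∃ T : Fin n → Fin n → Fin n → (Fin n → ℝ) → (Fin n → ℝ) → ℝ,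
    ∀ x ∈ U, ∀ y : Fin n → ℝ, y ≠ 0 → ∀ j i k l : Fin n,
      (∑ m, y m * dougHCov F j i k l m x y) = T j k l x y * y i

/-- Riemann curvature
`R^i{}_k = 2 ∂G^i/∂x^k − y^j ∂²G^i/∂x^j∂y^k + 2 G^j ∂²G^i/∂y^j∂y^k − (∂G^i/∂y^j)(∂G^j/∂y^k)`. -/
def riemannCurv {n : ℕ} (F : (Fin n → ℝ) → (Fin n → ℝ) → ℝ) (i k : Fin n) :
    (Fin n → ℝ) → (Fin n → ℝ) → ℝ :=
  fun x y => 2 * pdx k (spray F i) x y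
    - (∑ j, y j * pdy k (pdx j (spray F i)) x y)
    + 2 * (∑ j, spray F j x y * pdy j (pdy k (spray F i)) x y)
    - (∑ j, pdy j (spray F i) x y * pdy k (spray F j) x y)

/-- `F` is R-quadratic on `U`: each `y ↦ R^i{}_k(x,y)` is a homogeneous quadratic
polynomial in `y`. -/
def IsRQuadratic {n : ℕ} (U : Set (Fin n → ℝ)) (F : (Fin n → ℝ) → (Fin n → ℝ) → ℝ) : Prop :=
  ∀ x ∈ U, ∀ i k : Fin n, ∃ Q : Fin n → Fin n → ℝ, ∀ y : Fin n → ℝ, y ≠ 0 →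
    riemannCurv F i k x y = ∑ p, ∑ q, Q p q * y p * y q

/-- Ricci curvature `Ric = R^m{}_m`. -/
def ricciCurv {n : ℕ} (F : (Fin n → ℝ) → (Fin n → ℝ) → ℝ) :
    (Fin n → ℝ) → (Fin n → ℝ) → ℝ :=
  fun x y => ∑ m, riemannCurv F m m x y

/-- `F` is Ricci-flat on `U`. -/
def IsRicciFlat {n : ℕ} (U : Set (Fin n → ℝ)) (F : (Fin n → ℝ) → (Fin n → ℝ) → ℝ) : Prop :=
  ∀ x ∈ U, ∀ y : Fin n → ℝ, y ≠ 0 → ricciCurv F x y = 0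

/-- `F` has reversible Douglas curvature on `U`. -/
def HasReversibleDouglas {n : ℕ} (U : Set (Fin n → ℝ))
    (F : (Fin n → ℝ) → (Fin n → ℝ) → ℝ) : Prop :=
  ∀ x ∈ U, ∀ y : Fin n → ℝ, y ≠ 0 → ∀ j i k l : Fin n,
    douglasTensor F j i k l x (-y) = douglasTensor F j i k l x y

/-- A smooth positive definite symmetric matrix field (Riemannian metric) on `U`. -/
structure IsRiemMetricOn {n : ℕ} (U : Set (Fin n → ℝ))
    (a : (Fin n → ℝ) → Matrix (Fin n) (Fin n) ℝ) : Prop where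
  smooth : ∀ i j : Fin n, ContDiffOn ℝ (⊤ : ℕ∞) (fun x => a x i j) U
  symm : ∀ x ∈ U, ∀ i j : Fin n, a x i j = a x j i
  posdef : ∀ x ∈ U, ∀ v : Fin n → ℝ, v ≠ 0 → 0 < ∑ i, ∑ j, a x i j * v i * v j

/-- `α(x,y) = √(a_{ij}(x) y^i y^j)`. -/
def alphaOf {n : ℕ} (a : (Fin n → ℝ) → Matrix (Fin n) (Fin n) ℝ) :
    (Fin n → ℝ) → (Fin n → ℝ) → ℝ :=
  fun x y => Real.sqrt (∑ i, ∑ j, a x i j * y i * y j)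

/-- `β(x,y) = b_i(x) y^i`. -/
def betaOf {n : ℕ} (b : (Fin n → ℝ) → Fin n → ℝ) :
    (Fin n → ℝ) → (Fin n → ℝ) → ℝ :=
  fun x y => ∑ i, b x i * y i

/-- `‖β‖_α² (x) = a^{ij}(x) b_i(x) b_j(x)`. -/
def bNormSq {n : ℕ} (a : (Fin n → ℝ) → Matrix (Fin n) (Fin n) ℝ)
    (b : (Fin n → ℝ) → Fin n → ℝ) : (Fin n → ℝ) → ℝ :=
  fun x => ∑ i, ∑ j, (a x)⁻¹ i j * b x i * b x j

/-- Christoffel symbols `γ^i_{jk}` of the Levi-Civita connection of `a`. -/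
def christoffel {n : ℕ} (a : (Fin n → ℝ) → Matrix (Fin n) (Fin n) ℝ) (i j k : Fin n) :
    (Fin n → ℝ) → ℝ :=
  fun x => (1 / 2) * ∑ l, (a x)⁻¹ i l *
    (pd k (fun x' => a x' l j) x + pd j (fun x' => a x' l k) x - pd l (fun x' => a x' j k) x)

/-- Covariant derivative `b_{i|j}` of the 1-form `b` in the Levi-Civita connection of `a`. -/
def covDerivOneForm {n : ℕ} (a : (Fin n → ℝ) → Matrix (Fin n) (Fin n) ℝ)
    (b : (Fin n → ℝ) → Fin n → ℝ) (i j : Fin n) : (Fin n → ℝ) → ℝ :=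
  fun x => pd j (fun x' => b x' i) x - ∑ s, christoffel a s i j x * b x s

/-- Ricci tensor of the Levi-Civita connection of `a`. -/
def riemRicci {n : ℕ} (a : (Fin n → ℝ) → Matrix (Fin n) (Fin n) ℝ) (j k : Fin n) :
    (Fin n → ℝ) → ℝ :=
  fun x => ∑ i, (pd i (christoffel a i j k) x - pd k (christoffel a i j i) x
    + ∑ p, (christoffel a i i p x * christoffel a p j k x
      - christoffel a i k p x * christoffel a p j i x))

end

/-! ### Auxiliary toolkit -/

noncomputable section AuxGDW

open scoped ContDiff

namespace AuxGDW

variable {n : ℕ} {U : Set (Fin n → ℝ)}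

/-- The set of nonzero vectors. -/
def V (n : ℕ) : Set (Fin n → ℝ) := {y | y ≠ 0}

lemma isOpen_V : IsOpen (V n) := isOpen_ne

/-- Joint function. -/
def F2 (f : (Fin n → ℝ) → (Fin n → ℝ) → ℝ) : (Fin n → ℝ) × (Fin n → ℝ) → ℝ :=
  fun p => f p.1 p.2

/-- Jointly smooth on `U ×ˢ V`. -/
def SmOn (U : Set (Fin n → ℝ)) (f : (Fin n → ℝ) → (Fin n → ℝ) → ℝ) : Prop :=
  ContDiffOn ℝ ∞ (F2 f) (U ×ˢ V n)

lemma isOpen_S (hU : IsOpen U) : IsOpen (U ×ˢ V n) := hU.prod isOpen_V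

lemma mem_S {x y : Fin n → ℝ} (hx : x ∈ U) (hy : y ≠ 0) : ((x, y) : _ × _) ∈ U ×ˢ V n :=
  ⟨hx, hy⟩

lemma SmOn.diffY {f : (Fin n → ℝ) → (Fin n → ℝ) → ℝ} (hf : SmOn U f) (hU : IsOpen U)
    {x y : Fin n → ℝ} (hx : x ∈ U) (hy : y ≠ 0) : DifferentiableAt ℝ (f x) y := by
  have h1 : DifferentiableAt ℝ (F2 f) (x, y) :=
    (hf.contDiffAt ((isOpen_S hU).mem_nhds (mem_S hx hy))).differentiableAt (by norm_num)
  have h2 : DifferentiableAt ℝ (fun y' : Fin n → ℝ => ((x, y') : _ × _)) y :=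
    (differentiableAt_const x).prodMk differentiableAt_id
  exact h1.comp y h2

lemma SmOn.diffX {f : (Fin n → ℝ) → (Fin n → ℝ) → ℝ} (hf : SmOn U f) (hU : IsOpen U)
    {x y : Fin n → ℝ} (hx : x ∈ U) (hy : y ≠ 0) :
    DifferentiableAt ℝ (fun x' => f x' y) x := by
  have h1 : DifferentiableAt ℝ (F2 f) (x, y) :=
    (hf.contDiffAt ((isOpen_S hU).mem_nhds (mem_S hx hy))).differentiableAt (by norm_num)
  have h2 : DifferentiableAt ℝ (fun x' : Fin n → ℝ => ((x', y) : _ × _)) x :=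
    differentiableAt_id.prodMk (differentiableAt_const y)
  exact h1.comp x h2

lemma pdy_eq_joint {f : (Fin n → ℝ) → (Fin n → ℝ) → ℝ} (hf : SmOn U f) (hU : IsOpen U)
    {x y : Fin n → ℝ} (hx : x ∈ U) (hy : y ≠ 0) (m : Fin n) :
    pdy m f x y = fderiv ℝ (F2 f) (x, y) (0, Pi.single m 1) := by
  have h1 : HasFDerivAt (F2 f) (fderiv ℝ (F2 f) (x, y)) (x, y) :=
    ((hf.contDiffAt ((isOpen_S hU).mem_nhds (mem_S hx hy))).differentiableAt
      (by norm_num)).hasFDerivAt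
  have h2 : HasFDerivAt (fun y' : Fin n → ℝ => ((x, y') : _ × _))
      (ContinuousLinearMap.inr ℝ _ _) y := hasFDerivAt_prodMk_right x y
  have h3 : HasFDerivAt (f x)
      ((fderiv ℝ (F2 f) (x, y)).comp (ContinuousLinearMap.inr ℝ _ _)) y := h1.comp y h2
  rw [show pdy m f x y = fderiv ℝ (f x) y (Pi.single m 1) from rfl, h3.fderiv]
  rfl

lemma pdx_eq_joint {f : (Fin n → ℝ) → (Fin n → ℝ) → ℝ} (hf : SmOn U f) (hU : IsOpen U)
    {x y : Fin n → ℝ} (hx : x ∈ U) (hy : y ≠ 0) (m : Fin n) :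
    pdx m f x y = fderiv ℝ (F2 f) (x, y) (Pi.single m 1, 0) := by
  have h1 : HasFDerivAt (F2 f) (fderiv ℝ (F2 f) (x, y)) (x, y) :=
    ((hf.contDiffAt ((isOpen_S hU).mem_nhds (mem_S hx hy))).differentiableAt
      (by norm_num)).hasFDerivAt
  have h2 : HasFDerivAt (fun x' : Fin n → ℝ => ((x', y) : _ × _))
      (ContinuousLinearMap.inl ℝ _ _) x := hasFDerivAt_prodMk_left x y
  have h3 : HasFDerivAt (fun x' => f x' y)
      ((fderiv ℝ (F2 f) (x, y)).comp (ContinuousLinearMap.inl ℝ _ _)) x := h1.comp (g := F2 f) x h2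
  rw [show pdx m f x y = fderiv ℝ (fun x' => f x' y) x (Pi.single m 1) from rfl, h3.fderiv]
  rfl

lemma SmOn.pdy {f : (Fin n → ℝ) → (Fin n → ℝ) → ℝ} (hf : SmOn U f) (hU : IsOpen U)
    (m : Fin n) : SmOn U (pdy m f) := by
  have h : ContDiffOn ℝ ∞ (fun p => fderiv ℝ (F2 f) p (0, Pi.single m 1)) (U ×ˢ V n) := by
    have h1 : ContDiffOn ℝ ∞ (fderiv ℝ (F2 f)) (U ×ˢ V n) :=
      hf.fderiv_of_isOpen (isOpen_S hU) (by exact_mod_cast le_refl _)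
    exact h1.clm_apply contDiffOn_const
  exact h.congr fun p hp => pdy_eq_joint hf hU hp.1 hp.2 m

lemma SmOn.pdx {f : (Fin n → ℝ) → (Fin n → ℝ) → ℝ} (hf : SmOn U f) (hU : IsOpen U)
    (m : Fin n) : SmOn U (pdx m f) := by
  have h : ContDiffOn ℝ ∞ (fun p => fderiv ℝ (F2 f) p (Pi.single m 1, 0)) (U ×ˢ V n) := by
    have h1 : ContDiffOn ℝ ∞ (fderiv ℝ (F2 f)) (U ×ˢ V n) :=
      hf.fderiv_of_isOpen (isOpen_S hU) (by exact_mod_cast le_refl _)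
    exact h1.clm_apply contDiffOn_const
  exact h.congr fun p hp => pdx_eq_joint hf hU hp.1 hp.2 m

/-- Locality of `pdy`. -/
lemma pdy_congr {f g : (Fin n → ℝ) → (Fin n → ℝ) → ℝ}
    (h : ∀ x ∈ U, ∀ y : Fin n → ℝ, y ≠ 0 → f x y = g x y)
    {x y : Fin n → ℝ} (hx : x ∈ U) (hy : y ≠ 0) (m : Fin n) :
    pdy m f x y = pdy m g x y := by
  have he : f x =ᶠ[nhds y] g x := by
    filter_upwards [isOpen_V.mem_nhds hy] with z hz
    exact h x hx z hz
  show fderiv ℝ (f x) y _ = fderiv ℝ (g x) y _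
  rw [he.fderiv_eq]

/-- Locality of `pdx`. -/
lemma pdx_congr (hU : IsOpen U) {f g : (Fin n → ℝ) → (Fin n → ℝ) → ℝ}
    (h : ∀ x ∈ U, ∀ y : Fin n → ℝ, y ≠ 0 → f x y = g x y)
    {x y : Fin n → ℝ} (hx : x ∈ U) (hy : y ≠ 0) (m : Fin n) :
    pdx m f x y = pdx m g x y := by
  have he : (fun x' => f x' y) =ᶠ[nhds x] (fun x' => g x' y) := by
    filter_upwards [hU.mem_nhds hx] with z hz
    exact h z hz y hy
  show fderiv ℝ _ x _ = fderiv ℝ _ x _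
  rw [he.fderiv_eq]
/-! ### pointwise differentiation rules -/

lemma pdy_add {f g : (Fin n → ℝ) → (Fin n → ℝ) → ℝ} {x y : Fin n → ℝ}
    (hf : DifferentiableAt ℝ (f x) y) (hg : DifferentiableAt ℝ (g x) y) (m : Fin n) :
    pdy m (fun a b => f a b + g a b) x y = pdy m f x y + pdy m g x y := by
  show fderiv ℝ (fun b => f x b + g x b) y _ = _
  rw [fderiv_fun_add hf hg]; rfl

lemma pdy_sub {f g : (Fin n → ℝ) → (Fin n → ℝ) → ℝ} {x y : Fin n → ℝ}
    (hf : DifferentiableAt ℝ (f x) y) (hg : DifferentiableAt ℝ (g x) y) (m : Fin n) :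
    pdy m (fun a b => f a b - g a b) x y = pdy m f x y - pdy m g x y := by
  show fderiv ℝ (fun b => f x b - g x b) y _ = _
  rw [fderiv_fun_sub hf hg]; rfl

lemma pdy_mul {f g : (Fin n → ℝ) → (Fin n → ℝ) → ℝ} {x y : Fin n → ℝ}
    (hf : DifferentiableAt ℝ (f x) y) (hg : DifferentiableAt ℝ (g x) y) (m : Fin n) :
    pdy m (fun a b => f a b * g a b) x y
      = f x y * pdy m g x y + pdy m f x y * g x y := by
  show fderiv ℝ (fun b => f x b * g x b) y _ = _
  rw [fderiv_fun_mul hf hg]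
  show f x y * fderiv ℝ (g x) y _ + g x y * fderiv ℝ (f x) y _ = _
  show _ = f x y * fderiv ℝ (g x) y _ + fderiv ℝ (f x) y _ * g x y
  ring

lemma pdy_const_mul {f : (Fin n → ℝ) → (Fin n → ℝ) → ℝ} {x y : Fin n → ℝ}
    (hf : DifferentiableAt ℝ (f x) y) (c : ℝ) (m : Fin n) :
    pdy m (fun a b => c * f a b) x y = c * pdy m f x y := by
  show fderiv ℝ (fun b => c * f x b) y _ = _
  rw [fderiv_const_mul hf]; rfl

lemma pdy_sum {ι : Type*} (t : Finset ι) {f : ι → (Fin n → ℝ) → (Fin n → ℝ) → ℝ}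
    {x y : Fin n → ℝ} (hf : ∀ s ∈ t, DifferentiableAt ℝ (f s x) y) (m : Fin n) :
    pdy m (fun a b => ∑ s ∈ t, f s a b) x y = ∑ s ∈ t, pdy m (f s) x y := by
  show fderiv ℝ (fun b => ∑ s ∈ t, f s x b) y _ = _
  rw [fderiv_fun_sum hf]
  simp [pdy]

lemma pdy_coord {x y : Fin n → ℝ} (i m : Fin n) :
    pdy m (fun _ b => b i) x y = (Pi.single m 1 : Fin n → ℝ) i := by
  show fderiv ℝ (fun b : Fin n → ℝ => b i) y _ = _
  have : (fun b : Fin n → ℝ => b i)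
      = (ContinuousLinearMap.proj i : (Fin n → ℝ) →L[ℝ] ℝ) := rfl
  rw [this, ContinuousLinearMap.fderiv]; rfl

lemma pdy_const {x y : Fin n → ℝ} (c : ℝ) (m : Fin n) :
    pdy m (fun _ _ => c) x y = 0 := by
  show fderiv ℝ (fun _ : Fin n → ℝ => c) y _ = _
  rw [fderiv_fun_const]; rfl

/-! ### SmOn closure -/

lemma SmOn.add {f g : (Fin n → ℝ) → (Fin n → ℝ) → ℝ} (hf : SmOn U f) (hg : SmOn U g) :
    SmOn U (fun a b => f a b + g a b) := ContDiffOn.add hf hg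

lemma SmOn.sub {f g : (Fin n → ℝ) → (Fin n → ℝ) → ℝ} (hf : SmOn U f) (hg : SmOn U g) :
    SmOn U (fun a b => f a b - g a b) := ContDiffOn.sub hf hg

lemma SmOn.mul {f g : (Fin n → ℝ) → (Fin n → ℝ) → ℝ} (hf : SmOn U f) (hg : SmOn U g) :
    SmOn U (fun a b => f a b * g a b) := ContDiffOn.mul hf hg

lemma SmOn.const_mul {f : (Fin n → ℝ) → (Fin n → ℝ) → ℝ} (hf : SmOn U f) (c : ℝ) :
    SmOn U (fun a b => c * f a b) := ContDiffOn.const_smul c hf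

lemma SmOn.sum {ι : Type*} {t : Finset ι} {f : ι → (Fin n → ℝ) → (Fin n → ℝ) → ℝ}
    (hf : ∀ s ∈ t, SmOn U (f s)) : SmOn U (fun a b => ∑ s ∈ t, f s a b) := by
  classical
  induction t using Finset.induction_on with
  | empty => simp only [SmOn, Finset.sum_empty]; exact contDiffOn_const
  | insert _ _ hns ih =>
      rename_i a t
      have := (hf a (Finset.mem_insert_self a t)).add
        (ih fun s hs => hf s (Finset.mem_insert_of_mem hs))
      simpa [Finset.sum_insert hns] using this

lemma SmOn.coord (i : Fin n) : SmOn U (fun _ b => b i) := by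
  have : ContDiff ℝ ∞ (fun p : (Fin n → ℝ) × (Fin n → ℝ) => p.2 i) :=
    (contDiff_apply ℝ ℝ i).comp contDiff_snd
  exact this.contDiffOn

lemma SmOn.const (c : ℝ) : SmOn U (fun _ _ => c) := contDiffOn_const
/-! ### Homogeneity -/

/-- `f(x, c•y) = c^k f(x,y)` for `c > 0`, on `U × V`. -/
def HomOn (k : ℤ) (U : Set (Fin n → ℝ)) (f : (Fin n → ℝ) → (Fin n → ℝ) → ℝ) : Prop :=
  ∀ x ∈ U, ∀ y : Fin n → ℝ, y ≠ 0 → ∀ c : ℝ, 0 < c → f x (c • y) = c ^ k * f x y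

lemma fderiv_apply_self {y : Fin n → ℝ}
    (L : (Fin n → ℝ) →L[ℝ] ℝ) : L y = ∑ m, y m * L (Pi.single m 1) := by
  conv_lhs => rw [show y = ∑ m, Pi.single m (y m) from (Finset.univ_sum_single y).symm]
  rw [map_sum]
  congr 1; ext m
  rw [show (Pi.single m (y m) : Fin n → ℝ) = (y m) • (Pi.single m 1 : Fin n → ℝ) by
    ext j; by_cases h : j = m <;> simp [Pi.single_apply, h]]
  simp

/-- Euler's theorem. -/
lemma euler {k : ℤ} {f : (Fin n → ℝ) → (Fin n → ℝ) → ℝ} (hU : IsOpen U)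
    (hf : SmOn U f) (hom : HomOn k U f) {x y : Fin n → ℝ} (hx : x ∈ U) (hy : y ≠ 0) :
    ∑ m, y m * pdy m f x y = (k : ℝ) * f x y := by
  set L := fderiv ℝ (f x) y with hL
  have hdy : HasFDerivAt (f x) L y := (hf.diffY hU hx hy).hasFDerivAt
  have hscale : HasDerivAt (fun c : ℝ => c • y) ((1:ℝ) • y) 1 :=
    (hasDerivAt_id 1).smul_const y
  have hdy1 : HasFDerivAt (f x) L ((1:ℝ) • y) := by rwa [one_smul]
  have h1 : HasDerivAt (fun c : ℝ => f x (c • y)) (L ((1:ℝ) • y)) 1 :=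
    hdy1.comp_hasDerivAt (x := (1:ℝ)) hscale
  rw [one_smul] at h1
  have h2 : (fun c : ℝ => f x (c • y)) =ᶠ[nhds 1] fun c : ℝ => c ^ k * f x y := by
    filter_upwards [isOpen_Ioi.mem_nhds (by norm_num : (1:ℝ) ∈ Set.Ioi 0)] with c hc
    exact hom x hx y hy c hc
  have h3 : HasDerivAt (fun c : ℝ => c ^ k * f x y) (L y) 1 := h1.congr_of_eventuallyEq h2.symm
  have h4 : HasDerivAt (fun c : ℝ => c ^ k * f x y) ((k : ℝ) * f x y) 1 := by
    have := (hasDerivAt_zpow k (1:ℝ) (Or.inl one_ne_zero)).mul_const (f x y)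
    simpa using this
  have h5 : L y = (k : ℝ) * f x y := by rw [h3.unique h4]
  rw [← h5]
  exact (fderiv_apply_self L).symm

/-- The `y`-derivative of a `k`-homogeneous function is `(k-1)`-homogeneous. -/
lemma HomOn.pdy {k : ℤ} {f : (Fin n → ℝ) → (Fin n → ℝ) → ℝ} (hU : IsOpen U)
    (hf : SmOn U f) (hom : HomOn k U f) (m : Fin n) : HomOn (k - 1) U (pdy m f) := by
  intro x hx y hy c hc
  have hcne : c ≠ 0 := ne_of_gt hc
  have hcy : c • y ≠ 0 := smul_ne_zero hcne hy
  set L := fderiv ℝ (f x) y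
  set L' := fderiv ℝ (f x) (c • y)
  have hdy : HasFDerivAt (f x) L y := (hf.diffY hU hx hy).hasFDerivAt
  have hdy' : HasFDerivAt (f x) L' (c • y) := (hf.diffY hU hx hcy).hasFDerivAt
  have hsc : HasFDerivAt (fun z : Fin n → ℝ => c • z)
      (c • (ContinuousLinearMap.id ℝ (Fin n → ℝ))) y := (hasFDerivAt_id y).const_smul c
  have h1 : HasFDerivAt (fun z => f x (c • z))
      (L'.comp (c • (ContinuousLinearMap.id ℝ (Fin n → ℝ)))) y := hdy'.comp y hsc
  have h2 : (fun z => f x (c • z)) =ᶠ[nhds y] fun z => c ^ k * f x z := by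
    filter_upwards [isOpen_V.mem_nhds hy] with z hz
    exact hom x hx z hz c hc
  have h3 : HasFDerivAt (fun z => c ^ k * f x z)
      (L'.comp (c • (ContinuousLinearMap.id ℝ (Fin n → ℝ)))) y :=
    h1.congr_of_eventuallyEq h2.symm
  have h4 : HasFDerivAt (fun z => c ^ k * f x z) ((c ^ k) • L) y := hdy.const_smul (c ^ k)
  have h5 := h3.unique h4
  have h6 : L' (c • (Pi.single m 1 : Fin n → ℝ)) = c ^ k * L (Pi.single m 1) := by
    have := congrArg (fun (T : (Fin n → ℝ) →L[ℝ] ℝ) => T (Pi.single m 1)) h5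
    simpa using this
  have h7 : c * L' (Pi.single m 1) = c ^ k * L (Pi.single m 1) := by
    rw [← h6, map_smul]; simp [smul_eq_mul]
  show L' (Pi.single m 1) = c ^ (k - 1) * L (Pi.single m 1)
  rw [zpow_sub_one₀ hcne]
  field_simp at h7 ⊢
  linarith [h7]

/-- The `x`-derivative of a `k`-homogeneous function is `k`-homogeneous. -/
lemma HomOn.pdx {k : ℤ} {f : (Fin n → ℝ) → (Fin n → ℝ) → ℝ} (hU : IsOpen U)
    (hf : SmOn U f) (hom : HomOn k U f) (m : Fin n) : HomOn k U (pdx m f) := by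
  intro x hx y hy c hc
  have hcy : c • y ≠ 0 := smul_ne_zero (ne_of_gt hc) hy
  have h2 : (fun x' => f x' (c • y)) =ᶠ[nhds x] fun x' => c ^ k * f x' y := by
    filter_upwards [hU.mem_nhds hx] with z hz
    exact hom z hz y hy c hc
  show fderiv ℝ (fun x' => f x' (c • y)) x _ = c ^ k * fderiv ℝ (fun x' => f x' y) x _
  rw [h2.fderiv_eq, fderiv_const_mul (hf.diffX hU hx hy)]
  rfl

lemma HomOn.add {k : ℤ} {f g : (Fin n → ℝ) → (Fin n → ℝ) → ℝ}
    (hf : HomOn k U f) (hg : HomOn k U g) : HomOn k U (fun a b => f a b + g a b) := by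
  intro x hx y hy c hc; simp [hf x hx y hy c hc, hg x hx y hy c hc]; ring

lemma HomOn.sub {k : ℤ} {f g : (Fin n → ℝ) → (Fin n → ℝ) → ℝ}
    (hf : HomOn k U f) (hg : HomOn k U g) : HomOn k U (fun a b => f a b - g a b) := by
  intro x hx y hy c hc; simp [hf x hx y hy c hc, hg x hx y hy c hc]; ring

lemma HomOn.mul {k l : ℤ} {f g : (Fin n → ℝ) → (Fin n → ℝ) → ℝ}
    (hf : HomOn k U f) (hg : HomOn l U g) :
    HomOn (k + l) U (fun a b => f a b * g a b) := by
  intro x hx y hy c hc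
  show f x (c • y) * g x (c • y) = _
  rw [hf x hx y hy c hc, hg x hx y hy c hc, zpow_add₀ (ne_of_gt hc)]
  show _ = c ^ k * c ^ l * (f x y * g x y); ring

lemma HomOn.const_mul {k : ℤ} {f : (Fin n → ℝ) → (Fin n → ℝ) → ℝ}
    (hf : HomOn k U f) (r : ℝ) : HomOn k U (fun a b => r * f a b) := by
  intro x hx y hy c hc
  show r * f x (c • y) = _
  rw [hf x hx y hy c hc]
  show _ = c ^ k * (r * f x y); ring

lemma HomOn.sum {k : ℤ} {ι : Type*} {t : Finset ι}
    {f : ι → (Fin n → ℝ) → (Fin n → ℝ) → ℝ} (hf : ∀ s ∈ t, HomOn k U (f s)) :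
    HomOn k U (fun a b => ∑ s ∈ t, f s a b) := by
  intro x hx y hy c hc
  show ∑ s ∈ t, f s x (c • y) = c ^ k * ∑ s ∈ t, f s x y
  rw [Finset.mul_sum]
  exact Finset.sum_congr rfl fun s hs => hf s hs x hx y hy c hc

lemma homOn_coord (i : Fin n) : HomOn 1 U (fun _ b => b i) := by
  intro x hx y hy c hc; simp

lemma homOn_congr {k : ℤ} {f g : (Fin n → ℝ) → (Fin n → ℝ) → ℝ}
    (h : ∀ x ∈ U, ∀ y : Fin n → ℝ, y ≠ 0 → f x y = g x y) (hf : HomOn k U f) :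
    HomOn k U g := by
  intro x hx y hy c hc
  rw [← h x hx y hy, ← h x hx (c • y) (smul_ne_zero (ne_of_gt hc) hy), hf x hx y hy c hc]
/-! ### Symmetry of second derivatives -/

lemma pdy_comm {f : (Fin n → ℝ) → (Fin n → ℝ) → ℝ} (hU : IsOpen U) (hf : SmOn U f)
    {x y : Fin n → ℝ} (hx : x ∈ U) (hy : y ≠ 0) (a b : Fin n) :
    pdy a (pdy b f) x y = pdy b (pdy a f) x y := by
  -- the partial function is smooth on V
  have hphi : ContDiffOn ℝ ∞ (f x) (V n) := by
    have hmap : ContDiff ℝ ∞ (fun y' : Fin n → ℝ => ((x, y') : _ × _)) :=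
      (contDiff_const).prodMk contDiff_id
    have : ContDiffOn ℝ ∞ (F2 f ∘ fun y' : Fin n → ℝ => ((x, y') : _ × _)) (V n) :=
      hf.comp hmap.contDiffOn (fun z hz => mem_S hx hz)
    exact this
  set f' : (Fin n → ℝ) → ((Fin n → ℝ) →L[ℝ] ℝ) := fderiv ℝ (f x) with hf'def
  have hf'sm : ContDiffOn ℝ ∞ f' (V n) :=
    hphi.fderiv_of_isOpen isOpen_V (by exact_mod_cast le_refl _)
  have hev : ∀ᶠ z in nhds y, HasFDerivAt (f x) (f' z) z := by
    filter_upwards [isOpen_V.mem_nhds hy] with z hz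
    exact ((hphi.contDiffAt (isOpen_V.mem_nhds hz)).differentiableAt
      (by norm_num)).hasFDerivAt
  set f'' := fderiv ℝ f' y with hf''def
  have hx2 : HasFDerivAt f' f'' y :=
    ((hf'sm.contDiffAt (isOpen_V.mem_nhds hy)).differentiableAt (by norm_num)).hasFDerivAt
  have hsymm := second_derivative_symmetric_of_eventually hev hx2
  -- identify pdy a (pdy b f) x y with f'' applied
  have key : ∀ v w : Fin n → ℝ,
      fderiv ℝ (fun z => (f' z) w) y v = (f'' v) w := by
    intro v w
    have h1 : HasFDerivAt (fun z => (f' z) w)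
        ((ContinuousLinearMap.apply ℝ ℝ w).comp f'') y :=
      (ContinuousLinearMap.apply ℝ ℝ w).hasFDerivAt.comp y hx2
    rw [h1.fderiv]; rfl
  have e1 : pdy a (pdy b f) x y = (f'' (Pi.single a 1)) (Pi.single b 1) := by
    show fderiv ℝ (fun z => fderiv ℝ (f x) z (Pi.single b 1)) y (Pi.single a 1) = _
    exact key (Pi.single a 1) (Pi.single b 1)
  have e2 : pdy b (pdy a f) x y = (f'' (Pi.single b 1)) (Pi.single a 1) := by
    show fderiv ℝ (fun z => fderiv ℝ (f x) z (Pi.single a 1)) y (Pi.single b 1) = _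
    exact key (Pi.single b 1) (Pi.single a 1)
  rw [e1, e2, hsymm]
/-! ### smoothness and homogeneity of the spray -/

lemma SmOn.prod {ι : Type*} {t : Finset ι} {f : ι → (Fin n → ℝ) → (Fin n → ℝ) → ℝ}
    (hf : ∀ s ∈ t, SmOn U (f s)) : SmOn U (fun a b => ∏ s ∈ t, f s a b) := by
  classical
  induction t using Finset.induction_on with
  | empty => simp only [SmOn, Finset.prod_empty]; exact contDiffOn_const
  | insert _ _ hns ih =>
      rename_i a t
      have := (hf a (Finset.mem_insert_self a t)).mul
        (ih fun s hs => hf s (Finset.mem_insert_of_mem hs))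
      simpa [Finset.prod_insert hns] using this

lemma SmOn.inv {f : (Fin n → ℝ) → (Fin n → ℝ) → ℝ} (hf : SmOn U f)
    (h0 : ∀ x ∈ U, ∀ y : Fin n → ℝ, y ≠ 0 → f x y ≠ 0) :
    SmOn U (fun a b => (f a b)⁻¹) :=
  ContDiffOn.inv hf fun p hp => h0 p.1 hp.1 p.2 hp.2

lemma smOn_det {M : (Fin n → ℝ) → (Fin n → ℝ) → Matrix (Fin n) (Fin n) ℝ}
    (hM : ∀ i j, SmOn U (fun a b => M a b i j)) :
    SmOn U (fun a b => (M a b).det) := by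
  have h : SmOn U (fun a b => ∑ σ : Equiv.Perm (Fin n),
      ((Equiv.Perm.sign σ : ℤ) : ℝ) * ∏ i, M a b (σ i) i) :=
    SmOn.sum fun σ _ => (SmOn.prod fun i _ => hM (σ i) i).const_mul _
  have e : (fun a b => (M a b).det) = (fun a b => ∑ σ : Equiv.Perm (Fin n),
      ((Equiv.Perm.sign σ : ℤ) : ℝ) * ∏ i, M a b (σ i) i) := by
    funext a b
    rw [Matrix.det_apply]
    congr 1; funext σ
    rw [Units.smul_def, zsmul_eq_mul]
  rw [show SmOn U (fun a b => (M a b).det) = SmOn U _ from congrArg _ e]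
  exact h

section Finsler
variable {F : (Fin n → ℝ) → (Fin n → ℝ) → ℝ} (hF : IsFinslerOn n U F)
include hF

lemma smOn_Fsq : SmOn U (Fsq F) := by
  have : ContDiffOn ℝ ∞ (fun p : (Fin n → ℝ) × (Fin n → ℝ) => F p.1 p.2)
      (U ×ˢ V n) := hF.smooth.of_le (by simp)
  exact this.pow 2

lemma homOn_Fsq : HomOn 2 U (Fsq F) := by
  intro x hx y hy c hc
  show (F x (c • y)) ^ 2 = c ^ (2:ℤ) * (F x y) ^ 2
  rw [hF.homog x hx y c hc, zpow_two]
  ring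

lemma smOn_fundTensor (i j : Fin n) : SmOn U (fundTensor F i j) := by
  exact (((smOn_Fsq hF).pdy hF.isOpen j).pdy hF.isOpen i).const_mul _

lemma homOn_fundTensor (i j : Fin n) : HomOn 0 U (fundTensor F i j) := by
  have h := (((homOn_Fsq hF).pdy hF.isOpen (smOn_Fsq hF) j).pdy hF.isOpen
    ((smOn_Fsq hF).pdy hF.isOpen j) i).const_mul (1/2 : ℝ)
  exact h

lemma gMatrix_homog {x y : Fin n → ℝ} (hx : x ∈ U) (hy : y ≠ 0) {c : ℝ} (hc : 0 < c) :
    gMatrix F x (c • y) = gMatrix F x y := by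
  ext i j
  have := homOn_fundTensor hF i j x hx y hy c hc
  simpa [gMatrix] using this

lemma gMatrix_det_ne_zero {x y : Fin n → ℝ} (hx : x ∈ U) (hy : y ≠ 0) :
    (gMatrix F x y).det ≠ 0 := by
  intro h
  obtain ⟨v, hv, hvz⟩ := Matrix.exists_mulVec_eq_zero_iff.2 h
  have hpos := hF.posdef x hx y hy v hv
  have : ∑ i, ∑ j, fundTensor F i j x y * v i * v j = 0 := by
    have : ∀ i, ∑ j, fundTensor F i j x y * v i * v j
        = v i * (Matrix.mulVec (gMatrix F x y) v) i := by
      intro i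
      rw [Matrix.mulVec, dotProduct, Finset.mul_sum]
      congr 1; funext j
      show fundTensor F i j x y * v i * v j = v i * (fundTensor F i j x y * v j)
      ring
    rw [Finset.sum_congr rfl fun i _ => this i, hvz]
    simp
  linarith

omit hF in
lemma ginv_entry (x y : Fin n → ℝ) (i l : Fin n) :
    (gMatrix F x y)⁻¹ i l
      = ((gMatrix F x y).det)⁻¹ * (gMatrix F x y).adjugate i l := by
  rw [Matrix.inv_def, Ring.inverse_eq_inv]
  simp [Matrix.smul_apply, smul_eq_mul]

lemma smOn_ginv (i l : Fin n) : SmOn U (fun x y => (gMatrix F x y)⁻¹ i l) := by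
  have hU := hF.isOpen
  have hg : ∀ a b, SmOn U (fun x y => gMatrix F x y a b) := fun a b =>
    smOn_fundTensor hF a b
  have hdet : SmOn U (fun x y => (gMatrix F x y).det) := smOn_det hg
  have hadj : SmOn U (fun x y => (gMatrix F x y).adjugate i l) := by
    have e : (fun x y => (gMatrix F x y).adjugate i l)
        = fun x y => ((gMatrix F x y).updateRow l (Pi.single i 1)).det := by
      funext x y; rw [Matrix.adjugate_apply]
    rw [show SmOn U (fun x y => (gMatrix F x y).adjugate i l) = SmOn U _ from congrArg _ e]
    refine smOn_det fun a b => ?_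
    have e2 : (fun x y => ((gMatrix F x y).updateRow l (Pi.single i 1)) a b)
        = fun x y => if a = l then (Pi.single i 1 : Fin n → ℝ) b else gMatrix F x y a b := by
      funext x y; rw [Matrix.updateRow_apply]
    rw [show SmOn U _ = SmOn U _ from congrArg _ e2]
    by_cases hal : a = l
    · simpa [hal] using SmOn.const (U := U) ((Pi.single i 1 : Fin n → ℝ) b)
    · simpa [hal] using hg a b
  have hinv : SmOn U (fun x y => ((gMatrix F x y).det)⁻¹) :=
    hdet.inv fun x hx y hy => gMatrix_det_ne_zero hF hx hy
  have := hinv.mul hadj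
  exact this.congr fun p _ => ginv_entry (F:=F) p.1 p.2 i l

lemma homOn_ginv (i l : Fin n) : HomOn 0 U (fun x y => (gMatrix F x y)⁻¹ i l) := by
  intro x hx y hy c hc
  show (gMatrix F x (c • y))⁻¹ i l = _
  rw [gMatrix_homog hF hx hy hc]
  simp

lemma smOn_spray (i : Fin n) : SmOn U (spray F i) := by
  have hU := hF.isOpen
  have hFsq := smOn_Fsq hF
  refine SmOn.const_mul (SmOn.sum fun l _ => (smOn_ginv hF i l).mul
    ((SmOn.sum fun m _ => (SmOn.coord m).mul ((hFsq.pdx hU m).pdy hU l)).sub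
      (hFsq.pdx hU l))) _

lemma homOn_spray (i : Fin n) : HomOn 2 U (spray F i) := by
  have hU := hF.isOpen
  have hFsq := smOn_Fsq hF
  have h1 : ∀ l : Fin n, HomOn 2 U (fun x y =>
      (∑ m, y m * pdy l (pdx m (Fsq F)) x y) - pdx l (Fsq F) x y) := by
    intro l
    refine HomOn.sub (HomOn.sum fun m _ => ?_) ?_
    · have := (homOn_coord (U := U) m).mul
        (((homOn_Fsq hF).pdx hU hFsq m).pdy hU (hFsq.pdx hU m) l)
      exact this
    · exact (homOn_Fsq hF).pdx hU hFsq l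
  have h2 : HomOn 2 U (fun x y => ∑ l, (gMatrix F x y)⁻¹ i l *
      ((∑ m, y m * pdy l (pdx m (Fsq F)) x y) - pdx l (Fsq F) x y)) := by
    refine HomOn.sum fun l _ => ?_
    have := (homOn_ginv hF i l).mul (h1 l)
    exact this
  exact h2.const_mul _

end Finsler
/-! ### contraction identities -/

lemma diffY_coord {y : Fin n → ℝ} (s : Fin n) :
    DifferentiableAt ℝ (fun b : Fin n → ℝ => b s) y :=
  ((contDiff_apply ℝ ℝ s (n := 1)).differentiable one_ne_zero).differentiableAt

lemma pdy_expand_contraction (hU : IsOpen U)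
    {g : Fin n → (Fin n → ℝ) → (Fin n → ℝ) → ℝ} (hg : ∀ s, SmOn U (g s))
    {x y : Fin n → ℝ} (hx : x ∈ U) (hy : y ≠ 0) (j : Fin n) :
    pdy j (fun a b => ∑ s, b s * g s a b) x y
      = g j x y + ∑ s, y s * pdy j (g s) x y := by
  have h1 : ∀ s : Fin n, DifferentiableAt ℝ ((fun a b => b s * g s a b) x) y := by
    intro s
    exact (diffY_coord s).mul ((hg s).diffY hU hx hy)
  rw [pdy_sum Finset.univ (fun s _ => h1 s) j]
  have h2 : ∀ s : Fin n, pdy j (fun a b => b s * g s a b) x y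
      = y s * pdy j (g s) x y + (Pi.single j 1 : Fin n → ℝ) s * g s x y := by
    intro s
    rw [pdy_mul (diffY_coord s) ((hg s).diffY hU hx hy) j, pdy_coord]
  rw [Finset.sum_congr rfl fun s _ => h2 s, Finset.sum_add_distrib]
  have h3 : ∑ s, (Pi.single j 1 : Fin n → ℝ) s * g s x y = g j x y := by
    rw [Finset.sum_eq_single j]
    · simp
    · intro b _ hb; simp [Pi.single_apply, hb]
    · intro h; exact absurd (Finset.mem_univ j) h
  rw [h3]; ring

/-- If `∑ s, y s * g s = w` on `S`, then `g j + ∑ s, y s * pdy j (g s) = pdy j w` on `S`. -/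
lemma contract_shift (hU : IsOpen U)
    {g : Fin n → (Fin n → ℝ) → (Fin n → ℝ) → ℝ} (hg : ∀ s, SmOn U (g s))
    {w : (Fin n → ℝ) → (Fin n → ℝ) → ℝ}
    (heq : ∀ x ∈ U, ∀ y : Fin n → ℝ, y ≠ 0 → ∑ s, y s * g s x y = w x y)
    {x y : Fin n → ℝ} (hx : x ∈ U) (hy : y ≠ 0) (j : Fin n) :
    g j x y + ∑ s, y s * pdy j (g s) x y = pdy j w x y := by
  rw [← pdy_expand_contraction hU hg hx hy j]
  exact pdy_congr (fun a ha b hb => by simpa using heq a ha b hb) hx hy j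
/-! ### the Douglas tensor machinery -/

/-- The projective-invariant part of the spray. -/
def Hh (F : (Fin n → ℝ) → (Fin n → ℝ) → ℝ) (i : Fin n) :
    (Fin n → ℝ) → (Fin n → ℝ) → ℝ :=
  fun x y => spray F i x y - (1 / ((n : ℝ) + 1)) * (∑ m, pdy m (spray F m) x y) * y i

lemma douglasTensor_eq_Hh (F : (Fin n → ℝ) → (Fin n → ℝ) → ℝ) (j i k l : Fin n) :
    douglasTensor F j i k l = pdy j (pdy k (pdy l (Hh F i))) := rfl

section Finsler2
variable {F : (Fin n → ℝ) → (Fin n → ℝ) → ℝ} (hF : IsFinslerOn n U F)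
include hF

lemma smOn_Hh (i : Fin n) : SmOn U (Hh F i) := by
  have hU := hF.isOpen
  exact (smOn_spray hF i).sub
    (((SmOn.sum fun m _ => (smOn_spray hF m).pdy hU m).const_mul _).mul (SmOn.coord i))

lemma homOn_Hh (i : Fin n) : HomOn 2 U (Hh F i) := by
  have hU := hF.isOpen
  have h1 : HomOn 2 U (fun x y =>
      (1 / ((n : ℝ) + 1)) * (∑ m, pdy m (spray F m) x y) * y i) := by
    have s1 : HomOn 1 U (fun x y => ∑ m, pdy m (spray F m) x y) := by
      refine HomOn.sum fun m _ => ?_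
      have := (homOn_spray hF m).pdy hU (smOn_spray hF m) m
      exact this
    have s2 : HomOn 1 U (fun x y => (1 / ((n : ℝ) + 1)) * ∑ m, pdy m (spray F m) x y) :=
      s1.const_mul _
    have := s2.mul (homOn_coord (U := U) i)
    intro x hx y hy c hc
    have h' := this x hx y hy c hc
    simpa [mul_assoc] using h'
  exact (homOn_spray hF i).sub h1

lemma smOn_douglas (j i k l : Fin n) : SmOn U (douglasTensor F j i k l) := by
  have hU := hF.isOpen
  rw [douglasTensor_eq_Hh]
  exact (((smOn_Hh hF i).pdy hU l).pdy hU k).pdy hU j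

/-- C1: radial derivative of the Douglas tensor. -/
lemma douglas_C1 {x y : Fin n → ℝ} (hx : x ∈ U) (hy : y ≠ 0) (j i k l : Fin n) :
    ∑ s, y s * pdy s (douglasTensor F j i k l) x y = -(douglasTensor F j i k l x y) := by
  have hU := hF.isOpen
  have hhom : HomOn (-1) U (douglasTensor F j i k l) := by
    rw [douglasTensor_eq_Hh]
    have h1 := (homOn_Hh hF i).pdy hU (smOn_Hh hF i) l
    have h2 := h1.pdy hU ((smOn_Hh hF i).pdy hU l)  k
    have h3 := h2.pdy hU (((smOn_Hh hF i).pdy hU l).pdy hU k) j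
    norm_num at h3
    exact h3
  have := euler hU (smOn_douglas hF j i k l) hhom hx hy
  rw [this]; push_cast; ring

/-- C2: contraction on the first lower index. -/
lemma douglas_C2 {x y : Fin n → ℝ} (hx : x ∈ U) (hy : y ≠ 0) (i k l : Fin n) :
    ∑ s, y s * douglasTensor F s i k l x y = 0 := by
  have hU := hF.isOpen
  have hhom : HomOn 0 U (pdy k (pdy l (Hh F i))) := by
    have h1 := (homOn_Hh hF i).pdy hU (smOn_Hh hF i) l
    have h2 := h1.pdy hU ((smOn_Hh hF i).pdy hU l) k
    norm_num at h2
    exact h2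
  have := euler hU (((smOn_Hh hF i).pdy hU l).pdy hU k) hhom hx hy
  simpa [douglasTensor_eq_Hh] using this

/-- Euler identity for first-order contraction of `Hh`. -/
lemma Hh_contract1 {x y : Fin n → ℝ} (hx : x ∈ U) (hy : y ≠ 0) (i : Fin n) :
    ∑ s, y s * pdy s (Hh F i) x y = 2 * Hh F i x y := by
  have hU := hF.isOpen
  have := euler hU (smOn_Hh hF i) (homOn_Hh hF i) hx hy
  rw [this]; norm_num

/-- second-order contraction: `∑ s, y s * ∂_k ∂_s Hh = ∂_k Hh`. -/
lemma Hh_contract2 {x y : Fin n → ℝ} (hx : x ∈ U) (hy : y ≠ 0) (i k : Fin n) :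
    ∑ s, y s * pdy k (pdy s (Hh F i)) x y = pdy k (Hh F i) x y := by
  have hU := hF.isOpen
  have hg : ∀ s : Fin n, SmOn U (pdy s (Hh F i)) := fun s => (smOn_Hh hF i).pdy hU s
  have heq : ∀ a ∈ U, ∀ b : Fin n → ℝ, b ≠ 0 →
      ∑ s, b s * pdy s (Hh F i) a b = (fun a b => 2 * Hh F i a b) a b := fun a ha b hb =>
    Hh_contract1 hF ha hb i
  have h := contract_shift hU hg heq hx hy k
  have h2 : pdy k (fun a b => 2 * Hh F i a b) x y = 2 * pdy k (Hh F i) x y :=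
    pdy_const_mul ((smOn_Hh hF i).diffY hU hx hy) 2 k
  rw [h2] at h
  linarith [h]

/-- C3: contraction on the middle lower index. -/
lemma douglas_C3 {x y : Fin n → ℝ} (hx : x ∈ U) (hy : y ≠ 0) (j i l : Fin n) :
    ∑ s, y s * douglasTensor F j i s l x y = 0 := by
  have hU := hF.isOpen
  have hg : ∀ s : Fin n, SmOn U (pdy s (pdy l (Hh F i))) := fun s =>
    ((smOn_Hh hF i).pdy hU l).pdy hU s
  have hhom : HomOn 1 U (pdy l (Hh F i)) := by
    have := (homOn_Hh hF i).pdy hU (smOn_Hh hF i) l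
    norm_num at this; exact this
  have heq : ∀ a ∈ U, ∀ b : Fin n → ℝ, b ≠ 0 →
      ∑ s, b s * pdy s (pdy l (Hh F i)) a b = pdy l (Hh F i) a b := by
    intro a ha b hb
    have := euler hU ((smOn_Hh hF i).pdy hU l) hhom ha hb
    rw [this]; norm_num
  have h := contract_shift hU hg heq hx hy j
  have : ∑ s, y s * douglasTensor F j i s l x y
      = ∑ s, y s * pdy j (pdy s (pdy l (Hh F i))) x y := by
    refine Finset.sum_congr rfl fun s _ => ?_
    rw [douglasTensor_eq_Hh]
  rw [this]
  have hgj : pdy j (pdy l (Hh F i)) x y + ∑ s, y s * pdy j (pdy s (pdy l (Hh F i))) x y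
      = pdy j (pdy l (Hh F i)) x y := h
  linarith [hgj]

/-- C4: contraction on the last lower index. -/
lemma douglas_C4 {x y : Fin n → ℝ} (hx : x ∈ U) (hy : y ≠ 0) (j i k : Fin n) :
    ∑ s, y s * douglasTensor F j i k s x y = 0 := by
  have hU := hF.isOpen
  have hg : ∀ s : Fin n, SmOn U (pdy k (pdy s (Hh F i))) := fun s =>
    ((smOn_Hh hF i).pdy hU s).pdy hU k
  have heq : ∀ a ∈ U, ∀ b : Fin n → ℝ, b ≠ 0 →
      ∑ s, b s * pdy k (pdy s (Hh F i)) a b = pdy k (Hh F i) a b := fun a ha b hb =>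
    Hh_contract2 hF ha hb i k
  have h := contract_shift hU hg heq hx hy j
  have hswap : pdy k (pdy j (Hh F i)) x y = pdy j (pdy k (Hh F i)) x y :=
    pdy_comm hU (smOn_Hh hF i) hx hy k j
  have hswap2 : ∀ a ∈ U, ∀ b : Fin n → ℝ, b ≠ 0 →
      pdy j (fun a' b' => pdy k (Hh F i) a' b') a b = pdy k (pdy j (Hh F i))  a b := by
    intro a ha b hb
    exact (pdy_comm hU (smOn_Hh hF i) ha hb j k)
  have : ∑ s, y s * douglasTensor F j i k s x y
      = ∑ s, y s * pdy j (pdy k (pdy s (Hh F i))) x y := by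
    refine Finset.sum_congr rfl fun s _ => ?_
    rw [douglasTensor_eq_Hh]
  rw [this]
  -- h : pdy k (pdy j Hh) + ∑ = pdy j (pdy k Hh)
  have h' : pdy k (pdy j (Hh F i)) x y + ∑ s, y s * pdy j (pdy k (pdy s (Hh F i))) x y
      = pdy j (pdy k (Hh F i)) x y := h
  rw [hswap] at h'
  linarith [h']

end Finsler2
/-! ### pure algebra helpers for the final contraction -/

section Algebra
variable {yv pd : Fin n → ℝ} {pdd : Fin n → Fin n → ℝ} {Pv : ℝ}

lemma sum_single_mul (E : Fin n → ℝ) (t : Fin n) :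
    ∑ s, E s * (Pi.single t 1 : Fin n → ℝ) s = E t := by
  rw [Finset.sum_eq_single t]
  · simp
  · intro b _ hb; simp [Pi.single_apply, hb]
  · intro h; exact absurd (Finset.mem_univ t) h

lemma sum_mul_single (t : Fin n) :
    ∑ m, yv m * (Pi.single m 1 : Fin n → ℝ) t = yv t := by
  rw [Finset.sum_eq_single t]
  · simp
  · intro b _ hb; simp [Pi.single_apply, Ne.symm hb]
  · intro h; exact absurd (Finset.mem_univ t) h

variable (hE1 : ∑ m, yv m * pd m = Pv)
include hE1

lemma helper_S1 (Dp : Fin n → ℝ) :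
    ∑ m, yv m * (∑ s, (pd m * yv s + Pv * (Pi.single m 1 : Fin n → ℝ) s) * Dp s)
      = 2 * Pv * (∑ s, yv s * Dp s) := by
  have h : ∀ m, yv m * (∑ s, (pd m * yv s + Pv * (Pi.single m 1 : Fin n → ℝ) s) * Dp s)
      = ∑ s, ((yv m * pd m) * (yv s * Dp s)
          + (yv m * (Pi.single m 1 : Fin n → ℝ) s) * (Pv * Dp s)) := by
    intro m
    rw [Finset.mul_sum]
    exact Finset.sum_congr rfl fun s _ => by ring
  rw [Finset.sum_congr rfl fun m _ => h m, Finset.sum_comm]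
  have h2 : ∀ s, ∑ m, ((yv m * pd m) * (yv s * Dp s)
      + (yv m * (Pi.single m 1 : Fin n → ℝ) s) * (Pv * Dp s))
      = Pv * (yv s * Dp s) + yv s * (Pv * Dp s) := by
    intro s
    rw [Finset.sum_add_distrib, ← Finset.sum_mul, ← Finset.sum_mul, hE1, sum_mul_single]
  rw [Finset.sum_congr rfl fun s _ => h2 s, Finset.sum_add_distrib, ← Finset.mul_sum]
  have h3 : ∑ s, yv s * (Pv * Dp s) = Pv * ∑ s, yv s * Dp s := by
    rw [Finset.mul_sum]
    exact Finset.sum_congr rfl fun s _ => by ring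
  rw [h3]
  ring

variable (hE2 : ∀ t, ∑ m, yv m * pdd t m = 0)
include hE2

lemma helper_upper (E : Fin n → ℝ) (i : Fin n) :
    ∑ m, yv m * (∑ s, E s * (pdd s m * yv i + pd m * (Pi.single s 1 : Fin n → ℝ) i
        + pd s * (Pi.single m 1 : Fin n → ℝ) i))
      = Pv * E i + (∑ s, E s * pd s) * yv i := by
  have h : ∀ m, yv m * (∑ s, E s * (pdd s m * yv i + pd m * (Pi.single s 1 : Fin n → ℝ) i
      + pd s * (Pi.single m 1 : Fin n → ℝ) i))
      = ∑ s, ((yv m * pdd s m) * (E s * yv i)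
          + (yv m * pd m) * (E s * (Pi.single s 1 : Fin n → ℝ) i)
          + (yv m * (Pi.single m 1 : Fin n → ℝ) i) * (E s * pd s)) := by
    intro m
    rw [Finset.mul_sum]
    exact Finset.sum_congr rfl fun s _ => by ring
  rw [Finset.sum_congr rfl fun m _ => h m, Finset.sum_comm]
  have h2 : ∀ s, ∑ m, ((yv m * pdd s m) * (E s * yv i)
      + (yv m * pd m) * (E s * (Pi.single s 1 : Fin n → ℝ) i)
      + (yv m * (Pi.single m 1 : Fin n → ℝ) i) * (E s * pd s))
      = Pv * (E s * (Pi.single s 1 : Fin n → ℝ) i) + yv i * (E s * pd s) := by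
    intro s
    rw [Finset.sum_add_distrib, Finset.sum_add_distrib, ← Finset.sum_mul, ← Finset.sum_mul,
      ← Finset.sum_mul, hE1, hE2 s, sum_mul_single]
    ring
  rw [Finset.sum_congr rfl fun s _ => h2 s, Finset.sum_add_distrib, ← Finset.mul_sum,
    ← Finset.mul_sum]
  have h3 : ∑ s, E s * (Pi.single s 1 : Fin n → ℝ) i = E i := by
    rw [Finset.sum_eq_single i]
    · simp
    · intro b _ hb; simp [Pi.single_apply, Ne.symm hb]
    · intro h; exact absurd (Finset.mem_univ i) h
  rw [h3]
  ring

lemma helper_lower (E : Fin n → ℝ) (t : Fin n) :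
    ∑ m, yv m * (∑ s, E s * (pdd t m * yv s + pd m * (Pi.single t 1 : Fin n → ℝ) s
        + pd t * (Pi.single m 1 : Fin n → ℝ) s))
      = Pv * E t + pd t * (∑ s, yv s * E s) := by
  have h : ∀ m, yv m * (∑ s, E s * (pdd t m * yv s + pd m * (Pi.single t 1 : Fin n → ℝ) s
      + pd t * (Pi.single m 1 : Fin n → ℝ) s))
      = ∑ s, ((yv m * pdd t m) * (E s * yv s)
          + (yv m * pd m) * (E s * (Pi.single t 1 : Fin n → ℝ) s)
          + (yv m * (Pi.single m 1 : Fin n → ℝ) s) * (E s * pd t)) := by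
    intro m
    rw [Finset.mul_sum]
    exact Finset.sum_congr rfl fun s _ => by ring
  rw [Finset.sum_congr rfl fun m _ => h m, Finset.sum_comm]
  have h2 : ∀ s, ∑ m, ((yv m * pdd t m) * (E s * yv s)
      + (yv m * pd m) * (E s * (Pi.single t 1 : Fin n → ℝ) s)
      + (yv m * (Pi.single m 1 : Fin n → ℝ) s) * (E s * pd t))
      = Pv * (E s * (Pi.single t 1 : Fin n → ℝ) s) + yv s * (E s * pd t) := by
    intro s
    rw [Finset.sum_add_distrib, Finset.sum_add_distrib, ← Finset.sum_mul, ← Finset.sum_mul,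
      ← Finset.sum_mul, hE1, hE2 t, sum_mul_single]
    ring
  rw [Finset.sum_congr rfl fun s _ => h2 s, Finset.sum_add_distrib, ← Finset.mul_sum]
  rw [sum_single_mul E t]
  have h4 : ∑ s, yv s * (E s * pd t) = pd t * ∑ s, yv s * E s := by
    rw [Finset.mul_sum]
    exact Finset.sum_congr rfl fun s _ => by ring
  rw [h4]

end Algebra
/-! ### transformation rules under projective change -/

section Transform
variable {F Fb P : (Fin n → ℝ) → (Fin n → ℝ) → ℝ}
variable (hF : IsFinslerOn n U F) (hFb : IsFinslerOn n U Fb)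
variable (hPsm : SmOn U P) (hPhom : HomOn 1 U P)
variable (hproj : ∀ x ∈ U, ∀ y : Fin n → ℝ, y ≠ 0 → ∀ i : Fin n,
    spray Fb i x y = spray F i x y + P x y * y i)

include hF hPsm hPhom

omit hPhom in
lemma P_diffY {x y : Fin n → ℝ} (hx : x ∈ U) (hy : y ≠ 0) :
    DifferentiableAt ℝ (P x) y := hPsm.diffY hF.isOpen hx hy

lemma P_E1 {x y : Fin n → ℝ} (hx : x ∈ U) (hy : y ≠ 0) :
    ∑ m, y m * pdy m P x y = P x y := by
  have := euler hF.isOpen hPsm hPhom hx hy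
  rw [this]; norm_num

lemma P_E2 {x y : Fin n → ℝ} (hx : x ∈ U) (hy : y ≠ 0) (t : Fin n) :
    ∑ m, y m * pdy t (pdy m P) x y = 0 := by
  have hU := hF.isOpen
  have hg : ∀ s : Fin n, SmOn U (pdy s P) := fun s => hPsm.pdy hU s
  have heq : ∀ a ∈ U, ∀ b : Fin n → ℝ, b ≠ 0 → ∑ s, b s * pdy s P a b = P a b :=
    fun a ha b hb => P_E1 hF hPsm hPhom ha hb
  have h := contract_shift hU hg heq hx hy t
  linarith [h]

include hproj

lemma Nb_eq {x y : Fin n → ℝ} (hx : x ∈ U) (hy : y ≠ 0) (s m : Fin n) :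
    Nconn Fb s m x y = Nconn F s m x y + pdy m P x y * y s
      + P x y * (Pi.single m 1 : Fin n → ℝ) s := by
  have hU := hF.isOpen
  have h1 : pdy m (spray Fb s) x y
      = pdy m (fun a b => spray F s a b + P a b * b s) x y :=
    pdy_congr (fun a ha b hb => hproj a ha b hb s) hx hy m
  show pdy m (spray Fb s) x y = _
  rw [h1, pdy_add ((smOn_spray hF s).diffY hU hx hy)
      ((hPsm.diffY hU hx hy).mul (diffY_coord s)) m,
    pdy_mul (hPsm.diffY hU hx hy) (diffY_coord s) m, pdy_coord]
  show pdy m (spray F s) x y + (P x y * (Pi.single m 1 : Fin n → ℝ) s + pdy m P x y * y s)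
    = pdy m (spray F s) x y + pdy m P x y * y s + P x y * (Pi.single m 1 : Fin n → ℝ) s
  ring

lemma trace_eq {x y : Fin n → ℝ} (hx : x ∈ U) (hy : y ≠ 0) :
    ∑ m, pdy m (spray Fb m) x y
      = (∑ m, pdy m (spray F m) x y) + ((n : ℝ) + 1) * P x y := by
  have h1 : ∀ m : Fin n, pdy m (spray Fb m) x y
      = pdy m (spray F m) x y + (pdy m P x y * y m
        + P x y * (Pi.single m 1 : Fin n → ℝ) m) := by
    intro m
    have := Nb_eq hF hPsm hPhom hproj hx hy m m
    rw [show Nconn Fb m m x y = pdy m (spray Fb m) x y from rfl] at this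
    rw [this]
    show pdy m (spray F m) x y + _ + _ = _
    ring
  rw [Finset.sum_congr rfl fun m _ => h1 m, Finset.sum_add_distrib, Finset.sum_add_distrib]
  have h2 : ∑ m : Fin n, P x y * (Pi.single m 1 : Fin n → ℝ) m = (n : ℝ) * P x y := by
    have : ∀ m : Fin n, P x y * (Pi.single m 1 : Fin n → ℝ) m = P x y := by
      intro m; simp
    rw [Finset.sum_congr rfl fun m _ => this m, Finset.sum_const]
    simp [mul_comm]
  have hc : ∑ m : Fin n, pdy m P x y * y m = ∑ m : Fin n, y m * pdy m P x y :=
    Finset.sum_congr rfl fun m _ => mul_comm _ _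
  rw [h2, hc, P_E1 hF hPsm hPhom hx hy]
  ring

lemma Hh_eq {x y : Fin n → ℝ} (hx : x ∈ U) (hy : y ≠ 0) (i : Fin n) :
    Hh Fb i x y = Hh F i x y := by
  show spray Fb i x y - (1 / ((n : ℝ) + 1)) * (∑ m, pdy m (spray Fb m) x y) * y i = _
  rw [hproj x hx y hy i, trace_eq hF hPsm hPhom hproj hx hy]
  show _ = spray F i x y - (1 / ((n : ℝ) + 1)) * (∑ m, pdy m (spray F m) x y) * y i
  have hn : ((n : ℝ) + 1) ≠ 0 := by positivity
  field_simp
  ring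

lemma douglasTb_eq {x y : Fin n → ℝ} (hx : x ∈ U) (hy : y ≠ 0) (j i k l : Fin n) :
    douglasTensor Fb j i k l x y = douglasTensor F j i k l x y := by
  have hU := hF.isOpen
  have h1 : ∀ a ∈ U, ∀ b : Fin n → ℝ, b ≠ 0 →
      pdy l (Hh Fb i) a b = pdy l (Hh F i) a b := fun a ha b hb =>
    pdy_congr (fun a' ha' b' hb' => Hh_eq hF hPsm hPhom hproj ha' hb' i) ha hb l
  have h2 : ∀ a ∈ U, ∀ b : Fin n → ℝ, b ≠ 0 →
      pdy k (pdy l (Hh Fb i)) a b = pdy k (pdy l (Hh F i)) a b := fun a ha b hb =>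
    pdy_congr h1 ha hb k
  rw [douglasTensor_eq_Hh, douglasTensor_eq_Hh]
  exact pdy_congr h2 hx hy j

lemma Gb_eq {x y : Fin n → ℝ} (hx : x ∈ U) (hy : y ≠ 0) (i b m : Fin n) :
    GammaConn Fb i b m x y = GammaConn F i b m x y
      + pdy b (pdy m P) x y * y i
      + pdy m P x y * (Pi.single b 1 : Fin n → ℝ) i
      + pdy b P x y * (Pi.single m 1 : Fin n → ℝ) i := by
  have hU := hF.isOpen
  have h0 : ∀ a ∈ U, ∀ z : Fin n → ℝ, z ≠ 0 →
      pdy m (spray Fb i) a z = (fun a z => Nconn F i m a z + pdy m P a z * z i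
        + P a z * (Pi.single m 1 : Fin n → ℝ) i) a z := by
    intro a ha z hz
    exact Nb_eq hF hPsm hPhom hproj ha hz i m
  have h1 : pdy b (pdy m (spray Fb i)) x y
      = pdy b (fun a z => Nconn F i m a z + pdy m P a z * z i
          + P a z * (Pi.single m 1 : Fin n → ℝ) i) x y :=
    pdy_congr h0 hx hy b
  have dN : DifferentiableAt ℝ ((Nconn F i m) x) y :=
    ((smOn_spray hF i).pdy hU m).diffY hU hx hy
  have dPm : DifferentiableAt ℝ ((pdy m P) x) y := (hPsm.pdy hU m).diffY hU hx hy
  show pdy b (pdy m (spray Fb i)) x y = _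
  rw [h1, pdy_add (by exact dN.add (dPm.mul (diffY_coord i)))
      (by exact (hPsm.diffY hU hx hy).mul (differentiableAt_const _)) b,
    pdy_add dN (dPm.mul (diffY_coord i)) b,
    pdy_mul dPm (diffY_coord i) b,
    pdy_mul (hPsm.diffY hU hx hy) (differentiableAt_const _) b,
    pdy_coord, pdy_const]
  show GammaConn F i b m x y + _ + _ = _
  ring

end Transform
/-! ### the main computation -/

section Main
variable {F Fb P : (Fin n → ℝ) → (Fin n → ℝ) → ℝ}
variable (hF : IsFinslerOn n U F) (hFb : IsFinslerOn n U Fb)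
variable (hPsm : SmOn U P) (hPhom : HomOn 1 U P)
variable (hproj : ∀ x ∈ U, ∀ y : Fin n → ℝ, y ≠ 0 → ∀ i : Fin n,
    spray Fb i x y = spray F i x y + P x y * y i)

include hF hPsm hPhom hproj

lemma dougHCov_term {x y : Fin n → ℝ} (hx : x ∈ U) (hy : y ≠ 0) (j i k l m : Fin n) :
    dougHCov Fb j i k l m x y =
      dougHCov F j i k l m x y
      - (∑ s, (pdy m P x y * y s + P x y * (Pi.single m 1 : Fin n → ℝ) s)
          * pdy s (douglasTensor F j i k l) x y)
      + (∑ s, douglasTensor F j s k l x y * (pdy s (pdy m P) x y * y i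
          + pdy m P x y * (Pi.single s 1 : Fin n → ℝ) i
          + pdy s P x y * (Pi.single m 1 : Fin n → ℝ) i))
      - (∑ s, douglasTensor F s i k l x y * (pdy j (pdy m P) x y * y s
          + pdy m P x y * (Pi.single j 1 : Fin n → ℝ) s
          + pdy j P x y * (Pi.single m 1 : Fin n → ℝ) s))
      - (∑ s, douglasTensor F j i s l x y * (pdy k (pdy m P) x y * y s
          + pdy m P x y * (Pi.single k 1 : Fin n → ℝ) s
          + pdy k P x y * (Pi.single m 1 : Fin n → ℝ) s))
      - (∑ s, douglasTensor F j i k s x y * (pdy l (pdy m P) x y * y s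
          + pdy m P x y * (Pi.single l 1 : Fin n → ℝ) s
          + pdy l P x y * (Pi.single m 1 : Fin n → ℝ) s)) := by
  have hU := hF.isOpen
  have hDe : ∀ a ∈ U, ∀ b : Fin n → ℝ, b ≠ 0 → ∀ j' i' k' l' : Fin n,
      douglasTensor Fb j' i' k' l' a b = douglasTensor F j' i' k' l' a b :=
    fun a ha b hb j' i' k' l' => douglasTb_eq hF hPsm hPhom hproj ha hb j' i' k' l'
  have e0 : pdx m (douglasTensor Fb j i k l) x y
      = pdx m (douglasTensor F j i k l) x y :=
    pdx_congr hU (fun a ha b hb => hDe a ha b hb j i k l) hx hy m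
  have e1 : ∑ s, Nconn Fb s m x y * pdy s (douglasTensor Fb j i k l) x y
      = (∑ s, Nconn F s m x y * pdy s (douglasTensor F j i k l) x y)
        + ∑ s, (pdy m P x y * y s + P x y * (Pi.single m 1 : Fin n → ℝ) s)
            * pdy s (douglasTensor F j i k l) x y := by
    rw [← Finset.sum_add_distrib]
    refine Finset.sum_congr rfl fun s _ => ?_
    rw [Nb_eq hF hPsm hPhom hproj hx hy s m,
      pdy_congr (fun a ha b hb => hDe a ha b hb j i k l) hx hy s]
    ring
  have e2 : ∑ s, douglasTensor Fb j s k l x y * GammaConn Fb i s m x y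
      = (∑ s, douglasTensor F j s k l x y * GammaConn F i s m x y)
        + ∑ s, douglasTensor F j s k l x y * (pdy s (pdy m P) x y * y i
            + pdy m P x y * (Pi.single s 1 : Fin n → ℝ) i
            + pdy s P x y * (Pi.single m 1 : Fin n → ℝ) i) := by
    rw [← Finset.sum_add_distrib]
    refine Finset.sum_congr rfl fun s _ => ?_
    rw [hDe x hx y hy j s k l, Gb_eq hF hPsm hPhom hproj hx hy i s m]
    ring
  have e3 : ∑ s, douglasTensor Fb s i k l x y * GammaConn Fb s j m x y
      = (∑ s, douglasTensor F s i k l x y * GammaConn F s j m x y)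
        + ∑ s, douglasTensor F s i k l x y * (pdy j (pdy m P) x y * y s
            + pdy m P x y * (Pi.single j 1 : Fin n → ℝ) s
            + pdy j P x y * (Pi.single m 1 : Fin n → ℝ) s) := by
    rw [← Finset.sum_add_distrib]
    refine Finset.sum_congr rfl fun s _ => ?_
    rw [hDe x hx y hy s i k l, Gb_eq hF hPsm hPhom hproj hx hy s j m]
    ring
  have e4 : ∑ s, douglasTensor Fb j i s l x y * GammaConn Fb s k m x y
      = (∑ s, douglasTensor F j i s l x y * GammaConn F s k m x y)
        + ∑ s, douglasTensor F j i s l x y * (pdy k (pdy m P) x y * y s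
            + pdy m P x y * (Pi.single k 1 : Fin n → ℝ) s
            + pdy k P x y * (Pi.single m 1 : Fin n → ℝ) s) := by
    rw [← Finset.sum_add_distrib]
    refine Finset.sum_congr rfl fun s _ => ?_
    rw [hDe x hx y hy j i s l, Gb_eq hF hPsm hPhom hproj hx hy s k m]
    ring
  have e5 : ∑ s, douglasTensor Fb j i k s x y * GammaConn Fb s l m x y
      = (∑ s, douglasTensor F j i k s x y * GammaConn F s l m x y)
        + ∑ s, douglasTensor F j i k s x y * (pdy l (pdy m P) x y * y s
            + pdy m P x y * (Pi.single l 1 : Fin n → ℝ) s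
            + pdy l P x y * (Pi.single m 1 : Fin n → ℝ) s) := by
    rw [← Finset.sum_add_distrib]
    refine Finset.sum_congr rfl fun s _ => ?_
    rw [hDe x hx y hy j i k s, Gb_eq hF hPsm hPhom hproj hx hy s l m]
    ring
  show pdx m (douglasTensor Fb j i k l) x y
      - (∑ s, Nconn Fb s m x y * pdy s (douglasTensor Fb j i k l) x y)
      + (∑ s, douglasTensor Fb j s k l x y * GammaConn Fb i s m x y)
      - (∑ s, douglasTensor Fb s i k l x y * GammaConn Fb s j m x y)
      - (∑ s, douglasTensor Fb j i s l x y * GammaConn Fb s k m x y)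
      - (∑ s, douglasTensor Fb j i k s x y * GammaConn Fb s l m x y) = _
  rw [e0, e1, e2, e3, e4, e5]
  show _ = pdx m (douglasTensor F j i k l) x y
      - (∑ s, Nconn F s m x y * pdy s (douglasTensor F j i k l) x y)
      + (∑ s, douglasTensor F j s k l x y * GammaConn F i s m x y)
      - (∑ s, douglasTensor F s i k l x y * GammaConn F s j m x y)
      - (∑ s, douglasTensor F j i s l x y * GammaConn F s k m x y)
      - (∑ s, douglasTensor F j i k s x y * GammaConn F s l m x y)
      - _ + _ - _ - _ - _
  ring
end Main

section Main2
variable {F Fb P : (Fin n → ℝ) → (Fin n → ℝ) → ℝ}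
variable (hF : IsFinslerOn n U F) (hFb : IsFinslerOn n U Fb)
variable (hPsm : SmOn U P) (hPhom : HomOn 1 U P)
variable (hproj : ∀ x ∈ U, ∀ y : Fin n → ℝ, y ≠ 0 → ∀ i : Fin n,
    spray Fb i x y = spray F i x y + P x y * y i)

include hF hFb hPsm hPhom hproj

lemma gdw_sum {x y : Fin n → ℝ} (hx : x ∈ U) (hy : y ≠ 0) (j i k l : Fin n) :
    ∑ m, y m * dougHCov Fb j i k l m x y
      = (∑ m, y m * dougHCov F j i k l m x y)
        + (∑ s, douglasTensor F j s k l x y * pdy s P x y) * y i := by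
  have hU := hF.isOpen
  have hE1 : ∑ m, y m * pdy m P x y = P x y := P_E1 hF hPsm hPhom hx hy
  have hE2 : ∀ t : Fin n, ∑ m, y m * pdy t (pdy m P) x y = 0 :=
    fun t => P_E2 hF hPsm hPhom hx hy t
  have hT1 : ∑ m, y m * (∑ s, (pdy m P x y * y s + P x y * (Pi.single m 1 : Fin n → ℝ) s) * pdy s (douglasTensor F j i k l) x y)
      = 2 * P x y * (∑ s, y s * pdy s (douglasTensor F j i k l) x y) :=
    helper_S1 hE1 (fun s => pdy s (douglasTensor F j i k l) x y)
  rw [douglas_C1 hF hx hy j i k l] at hT1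
  have hT2 : ∑ m, y m * (∑ s, douglasTensor F j s k l x y * (pdy s (pdy m P) x y * y i + pdy m P x y * (Pi.single s 1 : Fin n → ℝ) i + pdy s P x y * (Pi.single m 1 : Fin n → ℝ) i))
      = P x y * douglasTensor F j i k l x y
        + (∑ s, douglasTensor F j s k l x y * pdy s P x y) * y i :=
    helper_upper hE1 hE2 (fun s => douglasTensor F j s k l x y) i
  have hT3 : ∑ m, y m * (∑ s, douglasTensor F s i k l x y * (pdy j (pdy m P) x y * y s + pdy m P x y * (Pi.single j 1 : Fin n → ℝ) s + pdy j P x y * (Pi.single m 1 : Fin n → ℝ) s))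
      = P x y * douglasTensor F j i k l x y
        + pdy j P x y * (∑ s, y s * douglasTensor F s i k l x y) :=
    helper_lower hE1 hE2 (fun s => douglasTensor F s i k l x y) j
  rw [douglas_C2 hF hx hy i k l] at hT3
  have hT4 : ∑ m, y m * (∑ s, douglasTensor F j i s l x y * (pdy k (pdy m P) x y * y s + pdy m P x y * (Pi.single k 1 : Fin n → ℝ) s + pdy k P x y * (Pi.single m 1 : Fin n → ℝ) s))
      = P x y * douglasTensor F j i k l x y
        + pdy k P x y * (∑ s, y s * douglasTensor F j i s l x y) :=
    helper_lower hE1 hE2 (fun s => douglasTensor F j i s l x y) k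
  rw [douglas_C3 hF hx hy j i l] at hT4
  have hT5 : ∑ m, y m * (∑ s, douglasTensor F j i k s x y * (pdy l (pdy m P) x y * y s + pdy m P x y * (Pi.single l 1 : Fin n → ℝ) s + pdy l P x y * (Pi.single m 1 : Fin n → ℝ) s))
      = P x y * douglasTensor F j i k l x y
        + pdy l P x y * (∑ s, y s * douglasTensor F j i k s x y) :=
    helper_lower hE1 hE2 (fun s => douglasTensor F j i k s x y) l
  rw [douglas_C4 hF hx hy j i k] at hT5
  calc ∑ m, y m * dougHCov Fb j i k l m x y
      = ∑ m, (y m * dougHCov F j i k l m x y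
          - y m * (∑ s, (pdy m P x y * y s + P x y * (Pi.single m 1 : Fin n → ℝ) s) * pdy s (douglasTensor F j i k l) x y)
          + y m * (∑ s, douglasTensor F j s k l x y * (pdy s (pdy m P) x y * y i + pdy m P x y * (Pi.single s 1 : Fin n → ℝ) i + pdy s P x y * (Pi.single m 1 : Fin n → ℝ) i))
          - y m * (∑ s, douglasTensor F s i k l x y * (pdy j (pdy m P) x y * y s + pdy m P x y * (Pi.single j 1 : Fin n → ℝ) s + pdy j P x y * (Pi.single m 1 : Fin n → ℝ) s))
          - y m * (∑ s, douglasTensor F j i s l x y * (pdy k (pdy m P) x y * y s + pdy m P x y * (Pi.single k 1 : Fin n → ℝ) s + pdy k P x y * (Pi.single m 1 : Fin n → ℝ) s))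
          - y m * (∑ s, douglasTensor F j i k s x y * (pdy l (pdy m P) x y * y s + pdy m P x y * (Pi.single l 1 : Fin n → ℝ) s + pdy l P x y * (Pi.single m 1 : Fin n → ℝ) s))) := by
        refine Finset.sum_congr rfl fun m _ => ?_
        rw [dougHCov_term hF hPsm hPhom hproj hx hy j i k l m]
        ring
    _ = (∑ m, y m * dougHCov F j i k l m x y)
          - (∑ m, y m * (∑ s, (pdy m P x y * y s + P x y * (Pi.single m 1 : Fin n → ℝ) s) * pdy s (douglasTensor F j i k l) x y))
          + (∑ m, y m * (∑ s, douglasTensor F j s k l x y * (pdy s (pdy m P) x y * y i + pdy m P x y * (Pi.single s 1 : Fin n → ℝ) i + pdy s P x y * (Pi.single m 1 : Fin n → ℝ) i)))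
          - (∑ m, y m * (∑ s, douglasTensor F s i k l x y * (pdy j (pdy m P) x y * y s + pdy m P x y * (Pi.single j 1 : Fin n → ℝ) s + pdy j P x y * (Pi.single m 1 : Fin n → ℝ) s)))
          - (∑ m, y m * (∑ s, douglasTensor F j i s l x y * (pdy k (pdy m P) x y * y s + pdy m P x y * (Pi.single k 1 : Fin n → ℝ) s + pdy k P x y * (Pi.single m 1 : Fin n → ℝ) s)))
          - (∑ m, y m * (∑ s, douglasTensor F j i k s x y * (pdy l (pdy m P) x y * y s + pdy m P x y * (Pi.single l 1 : Fin n → ℝ) s + pdy l P x y * (Pi.single m 1 : Fin n → ℝ) s))) := by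
        simp only [Finset.sum_sub_distrib, Finset.sum_add_distrib]
    _ = (∑ m, y m * dougHCov F j i k l m x y)
        + (∑ s, douglasTensor F j s k l x y * pdy s P x y) * y i := by
        rw [hT1, hT2, hT3, hT4, hT5]
        ring

lemma gdw_forward : IsGDW U F → IsGDW U Fb := by
  rintro ⟨T, hT⟩
  refine ⟨fun j k l x y => T j k l x y
    + ∑ s, douglasTensor F j s k l x y * pdy s P x y, ?_⟩
  intro x hx y hy j i k l
  rw [gdw_sum hF hFb hPsm hPhom hproj hx hy j i k l, hT x hx y hy j i k l]
  ring

end Main2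
end AuxGDW
end AuxGDW
/-- if the spray coefficients of `F` and `F̄` are projectively
related, `Ḡ^i = G^i + P y^i` with `P` smooth and positively 1-homogeneous, then
`F` is a generalized Douglas–Weyl metric iff `F̄` is. -/
theorem gdw_projective_invariance {n : ℕ} {U : Set (Fin n → ℝ)}
    {F Fb : (Fin n → ℝ) → (Fin n → ℝ) → ℝ}
    (hF : IsFinslerOn n U F) (hFb : IsFinslerOn n U Fb)
    (P : (Fin n → ℝ) → (Fin n → ℝ) → ℝ)
    (hPsmooth : ContDiffOn ℝ (⊤ : ℕ∞)
      (fun p : (Fin n → ℝ) × (Fin n → ℝ) => P p.1 p.2)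
      (U ×ˢ {y : Fin n → ℝ | y ≠ 0}))
    (hPhom : ∀ x ∈ U, ∀ y : Fin n → ℝ, y ≠ 0 → ∀ c : ℝ, 0 < c →
      P x (c • y) = c * P x y)
    (hproj : ∀ x ∈ U, ∀ y : Fin n → ℝ, y ≠ 0 → ∀ i : Fin n,
      spray Fb i x y = spray F i x y + P x y * y i) :
    IsGDW U F ↔ IsGDW U Fb := by
  have hPsm : AuxGDW.SmOn U P := hPsmooth.of_le (by simp)
  have hPh : AuxGDW.HomOn 1 U P := by
    intro x hx y hy c hc
    rw [hPhom x hx y hy c hc, zpow_one]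
  constructor
  · exact AuxGDW.gdw_forward hF hFb hPsm hPh hproj
  · have hPsm' : AuxGDW.SmOn U (fun x y => -(P x y)) := hPsm.neg
    have hPh' : AuxGDW.HomOn 1 U (fun x y => -(P x y)) := by
      intro x hx y hy c hc
      show -(P x (c • y)) = c ^ (1:ℤ) * -(P x y)
      rw [zpow_one, hPhom x hx y hy c hc]
      ring
    have hproj' : ∀ x ∈ U, ∀ y : Fin n → ℝ, y ≠ 0 → ∀ i : Fin n,
        spray F i x y = spray Fb i x y + (fun x y => -(P x y)) x y * y i := by
      intro x hx y hy i
      rw [hproj x hx y hy i]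
      ring
    exact AuxGDW.gdw_forward hFb hF hPsm' hPh' hproj'
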